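/- arXiv:2504.15383 — 5 statements merged into one kernel-verified Lean document; each statement's English description precedes it below -/
import Mathlib

section
/- A group G is perfect and equal to the set of products of at most c commutators for some constant c if and only if the abelianization of every ultrapower of G (with respect to a non-principal ultrafilter on ℕ) is trivial. -/
open Filter
open scoped commutatorElement

/-- `g` is a product of at most `c` commutators. -/
def IsProdOfComms {G : Type*} [Group G] (c : ℕ) (g : G) : Prop :=
  ∃ l : List G, l.length ≤ c ∧ (∀ x ∈ l, ∃ a b : G, x = ⁅a, b⁆) ∧ l.prod = g

/-!
If every element of `G` is a product of at most `c` commutators, the same holds coordinatewise,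
hence in every ultrapower, so its abelianization vanishes. Conversely, if the ultrapower along
the hyperfilter `U` is perfect, then the germ of a sequence `gₙ` is a product of some `c` commutators,
so `gₙ` is a product of `c` commutators for `U`-almost every `n`; taking `gₙ` to need more than
`n` commutators contradicts this, as `U`-almost every `n` is at least `c`.
-/

section IsProdOfComms

variable {G : Type*} [Group G] {c d : ℕ} {g : G}

theorem isProdOfComms_zero_iff : IsProdOfComms 0 g ↔ g = 1 := by
  constructor
  · rintro ⟨l, hl, -, rfl⟩
    rw [List.length_eq_zero_iff.mp (Nat.le_zero.mp hl), List.prod_nil]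
  · rintro rfl
    exact ⟨[], le_rfl, by simp, rfl⟩

theorem isProdOfComms_succ_iff :
    IsProdOfComms (c + 1) g ↔ ∃ a b h : G, IsProdOfComms c h ∧ ⁅a, b⁆ * h = g := by
  constructor
  · rintro ⟨_ | ⟨x, l⟩, hl, hcomm, rfl⟩
    · exact ⟨1, 1, 1, ⟨[], by simp, by simp, rfl⟩, by simp⟩
    · obtain ⟨a, b, rfl⟩ := hcomm x List.mem_cons_self
      exact ⟨a, b, l.prod, ⟨l, by simpa using hl, fun y hy => hcomm y (List.mem_cons_of_mem _ hy),
        rfl⟩, rfl⟩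
  · rintro ⟨a, b, h, ⟨l, hl, hcomm, rfl⟩, rfl⟩
    refine ⟨⁅a, b⁆ :: l, by simpa using hl, ?_, List.prod_cons⟩
    rintro x (_ | ⟨_, hx⟩)
    exacts [⟨a, b, rfl⟩, hcomm x hx]

namespace IsProdOfComms

theorem mono (hcd : c ≤ d) : IsProdOfComms c g → IsProdOfComms d g
  | ⟨l, hl, hcomm, hprod⟩ => ⟨l, hl.trans hcd, hcomm, hprod⟩

theorem mem_commutator (hg : IsProdOfComms c g) : g ∈ commutator G := by
  induction c generalizing g with
  | zero => rw [isProdOfComms_zero_iff.mp hg]; exact one_mem _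
  | succ c ih =>
    obtain ⟨a, b, h, hh, rfl⟩ := isProdOfComms_succ_iff.mp hg
    exact mul_mem (Subgroup.commutator_mem_commutator (Subgroup.mem_top a)
      (Subgroup.mem_top b)) (ih hh)

end IsProdOfComms

theorem commutator_eq_top_of_forall_isProdOfComms (hc : ∀ g : G, IsProdOfComms c g) :
    commutator G = ⊤ :=
  (Subgroup.eq_top_iff' _).mpr fun g => (hc g).mem_commutator

theorem exists_isProdOfComms_of_mem_commutator (hg : g ∈ commutator G) :
    ∃ c, IsProdOfComms c g := by
  rw [commutator_eq_closure] at hg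
  induction hg using Subgroup.closure_induction with
  | mem x hx =>
    obtain ⟨a, b, rfl⟩ := hx
    exact ⟨1, isProdOfComms_succ_iff.mpr ⟨a, b, 1, isProdOfComms_zero_iff.mpr rfl, mul_one _⟩⟩
  | one => exact ⟨0, isProdOfComms_zero_iff.mpr rfl⟩
  | mul x y _ _ hx hy =>
    obtain ⟨c, l, hl, hcomm, rfl⟩ := hx
    obtain ⟨d, m, hm, hcomm', rfl⟩ := hy
    refine ⟨c + d, l ++ m, by simpa using add_le_add hl hm, ?_, List.prod_append⟩
    simp only [List.mem_append]
    rintro z (hz | hz)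
    exacts [hcomm z hz, hcomm' z hz]
  | inv x _ hx =>
    obtain ⟨c, l, hl, hcomm, rfl⟩ := hx
    refine ⟨c, (l.map (·⁻¹)).reverse, by simpa using hl, ?_, (List.prod_inv_reverse l).symm⟩
    simp only [List.mem_reverse, List.mem_map]
    rintro _ ⟨y, hy, rfl⟩
    obtain ⟨a, b, rfl⟩ := hcomm y hy
    exact ⟨b, a, commutatorElement_inv a b⟩

theorem Abelianization.subsingleton_iff : Subsingleton (Abelianization G) ↔ commutator G = ⊤ :=
  QuotientGroup.subsingleton_iff

end IsProdOfComms

namespace Filter.Germ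

variable {α G : Type*} [Group G] {l : Filter α} {c : ℕ}

theorem isProdOfComms_coe {f : α → G} (hf : ∀ x, IsProdOfComms c (f x)) :
    IsProdOfComms c (f : Germ l G) := by
  induction c generalizing f with
  | zero =>
    simp only [isProdOfComms_zero_iff] at hf ⊢
    rw [funext hf]
    rfl
  | succ c ih =>
    choose a b h hh hf using fun x => isProdOfComms_succ_iff.mp (hf x)
    refine isProdOfComms_succ_iff.mpr ⟨a, b, h, ih hh, ?_⟩
    rw [← funext hf]
    rfl

theorem eventually_isProdOfComms_of_coe {f : α → G} (hf : IsProdOfComms c (f : Germ l G)) :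
    ∀ᶠ x in l, IsProdOfComms c (f x) := by
  induction c generalizing f with
  | zero =>
    simp only [isProdOfComms_zero_iff] at hf ⊢
    exact coe_eq.mp hf
  | succ c ih =>
    obtain ⟨a, b, h, hh, hf⟩ := isProdOfComms_succ_iff.mp hf
    induction a using inductionOn
    induction b using inductionOn
    induction h using inductionOn
    filter_upwards [ih hh, coe_eq.mp hf] with x hx hfx
    exact isProdOfComms_succ_iff.mpr ⟨_, _, _, hx, hfx⟩

theorem commutator_eq_top_of_forall_isProdOfComms (hc : ∀ g : G, IsProdOfComms c g) :
    commutator (Germ l G) = ⊤ :=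
  _root_.commutator_eq_top_of_forall_isProdOfComms fun g =>
    inductionOn g fun f => isProdOfComms_coe fun x => hc (f x)

theorem exists_forall_isProdOfComms {l : Filter ℕ} [l.NeBot] (hl : l ≤ atTop)
    (h : commutator (Germ l G) = ⊤) : ∃ c, ∀ g : G, IsProdOfComms c g := by
  by_contra! hunbounded
  choose g hg using hunbounded
  have hmem : (g : Germ l G) ∈ commutator (Germ l G) := h ▸ Subgroup.mem_top _
  obtain ⟨c, hc⟩ := exists_isProdOfComms_of_mem_commutator hmem
  obtain ⟨n, hcn, hn⟩ := (((eventually_ge_atTop c).filter_mono hl).and (eventually_isProdOfComms_of_coe hc)).exists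
  exact hg n (hn.mono hcn)

end Filter.Germ

/-- a group `G` is perfect with `G` equal to the set of products of at most `c`
commutators (for some `c`) iff the abelianization of every ultrapower of `G` with respect to a
non-principal ultrafilter on `ℕ` is trivial. -/
theorem perfect_bounded_comm_iff_ultrapower_abelianization_trivial
    (G : Type*) [Group G] :
    (commutator G = ⊤ ∧ ∃ c : ℕ, ∀ g : G, IsProdOfComms c g) ↔
      (∀ U : Ultrafilter ℕ, (∀ a : ℕ, (U : Filter ℕ) ≠ pure a) →
        Subsingleton (Abelianization (Filter.Germ (U : Filter ℕ) G))) := by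
  constructor
  · rintro ⟨-, c, hc⟩ U -
    exact Abelianization.subsingleton_iff.mpr (Germ.commutator_eq_top_of_forall_isProdOfComms hc)
  · intro h
    have hU : ∀ a : ℕ, ((hyperfilter ℕ : Ultrafilter ℕ) : Filter ℕ) ≠ pure a := fun a ha =>
      (Set.finite_singleton a).notMem_hyperfilter (show {a} ∈ (hyperfilter ℕ : Filter ℕ) from
        ha ▸ mem_pure.mpr rfl)
    obtain ⟨c, hc⟩ := Germ.exists_forall_isProdOfComms Nat.hyperfilter_le_atTop
      (Abelianization.subsingleton_iff.mp (h _ hU))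
    exact ⟨commutator_eq_top_of_forall_isProdOfComms hc, c, hc⟩
end

section
/- Let 1 → C → E →^ρ G → 1 be a topological central extension of topological groups with C discrete, and suppose ρ admits a continuous section (group homomorphism splitting) η over an open subgroup U ≤ G and an abstract section ξ over a dense subgroup D ≤ G. If ξ and η agree on an open subgroup of a subgroup H ≤ D, then ξ restricted to H extends to a continuous section over the closure of H in G. -/
/-!
Fix an open neighbourhood `N` of `1` with `N / N` inside `U` and inside the open set cutting
out `V` from `H`. Every point of the closure of `H` lies in some `h N` with `h ∈ H`, and there we
put `s x = ξ h * η (h⁻¹ x)`; this does not depend on `h` because two admissible choices differ by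
an element of `V`, where `ξ = η`. So `s` is locally a translate of `η`, hence continuous, and it
is a section pointwise. Its multiplicativity defect `s (x y)⁻¹ * s x * s y` is then a continuous
function on `closure H × closure H` with values in the discrete kernel, equal to `1` on the dense
subset `H × H`, hence identically `1`.
-/

def IsSectionOn {E G : Type*} [Group E] [Group G] (ρ : E →* G) (s : G → E)
    (K : Subgroup G) : Prop :=
  (∀ x ∈ K, ρ (s x) = x) ∧ (∀ x ∈ K, ∀ y ∈ K, s (x * y) = s x * s y)

open Set Filter Topology
open scoped Pointwise

section Extension

variable {E G : Type*} [Group E] [Group G] {ρ : E →* G}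

theorem IsSectionOn.mono {s : G → E} {K L : Subgroup G} (hs : IsSectionOn ρ s L) (hKL : K ≤ L) :
    IsSectionOn ρ s K :=
  ⟨fun x hx => hs.1 x (hKL hx), fun x hx y hy => hs.2 x (hKL hx) y (hKL hy)⟩

theorem IsSectionOn.congr {s t : G → E} {K : Subgroup G} (hs : IsSectionOn ρ s K)
    (hst : EqOn s t K) : IsSectionOn ρ t K :=
  ⟨fun x hx => hst hx ▸ hs.1 x hx, fun x hx y hy => by
    rw [← hst hx, ← hst hy, ← hst (K.mul_mem hx hy), hs.2 x hx y hy]⟩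

theorem IsSectionOn.map_one {s : G → E} {K : Subgroup G} (hs : IsSectionOn ρ s K) : s 1 = 1 := by
  have h := hs.2 1 K.one_mem 1 K.one_mem
  rwa [mul_one, left_eq_mul] at h

open Classical in
noncomputable def sectionExtension (ξ η : G → E) (H : Subgroup G) (N : Set G) (x : G) : E :=
  if hx : ∃ h ∈ H, h⁻¹ * x ∈ N then ξ hx.choose * η (hx.choose⁻¹ * x) else 1

variable {ξ η : G → E} {H U : Subgroup G} {N : Set G}

theorem sectionExtension_eq (hξ : IsSectionOn ρ ξ H) (hη : IsSectionOn ρ η U) (h1N : 1 ∈ N)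
    (hNU : N / N ⊆ U) (hagree : EqOn ξ η ((H : Set G) ∩ (N / N))) {x h : G} (hh : h ∈ H)
    (hx : h⁻¹ * x ∈ N) : sectionExtension ξ η H N x = ξ h * η (h⁻¹ * x) := by
  have hex : ∃ h ∈ H, h⁻¹ * x ∈ N := ⟨h, hh, hx⟩
  rw [sectionExtension, dif_pos hex]
  obtain ⟨hh', hx'⟩ := hex.choose_spec
  set h' := hex.choose
  have hquot : h⁻¹ * h' = (h⁻¹ * x) / (h'⁻¹ * x) := by
    simp [div_eq_mul_inv, mul_assoc]
  have hdiv : h⁻¹ * h' ∈ N / N := hquot ▸ div_mem_div hx hx'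
  have hmemH : h⁻¹ * h' ∈ H := H.mul_mem (H.inv_mem hh) hh'
  have hξ' : ξ h' = ξ h * ξ (h⁻¹ * h') := by
    rw [← hξ.2 _ hh _ hmemH, mul_inv_cancel_left]
  have hη' : η (h⁻¹ * x) = η (h⁻¹ * h') * η (h'⁻¹ * x) := by
    rw [← hη.2 _ (hNU hdiv) _ (hNU (subset_div_left h1N hx'))]
    group
  rw [hξ', hη', hagree ⟨hmemH, hdiv⟩, mul_assoc]

theorem sectionExtension_of_mem (hξ : IsSectionOn ρ ξ H) (hη : IsSectionOn ρ η U) (h1N : 1 ∈ N)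
    (hNU : N / N ⊆ U) (hagree : EqOn ξ η ((H : Set G) ∩ (N / N))) {x : G} (hx : x ∈ H) :
    sectionExtension ξ η H N x = ξ x := by
  rw [sectionExtension_eq hξ hη h1N hNU hagree hx (by rwa [inv_mul_cancel]), inv_mul_cancel,
    hη.map_one, mul_one]

theorem map_sectionExtension (hξ : IsSectionOn ρ ξ H) (hη : IsSectionOn ρ η U) (h1N : 1 ∈ N)
    (hNU : N / N ⊆ U) (hagree : EqOn ξ η ((H : Set G) ∩ (N / N))) {x : G}
    (hx : ∃ h ∈ H, h⁻¹ * x ∈ N) : ρ (sectionExtension ξ η H N x) = x := by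
  obtain ⟨h, hh, hhx⟩ := hx
  rw [sectionExtension_eq hξ hη h1N hNU hagree hh hhx, map_mul, hξ.1 h hh,
    hη.1 _ (hNU (subset_div_left h1N hhx)), mul_inv_cancel_left]

theorem continuousAt_sectionExtension [TopologicalSpace E] [ContinuousMul E] [TopologicalSpace G]
    [IsTopologicalGroup G] (hξ : IsSectionOn ρ ξ H) (hη : IsSectionOn ρ η U)
    (hUopen : IsOpen (U : Set G)) (hηcont : ContinuousOn η U) (hNopen : IsOpen N) (h1N : 1 ∈ N)
    (hNU : N / N ⊆ U) (hagree : EqOn ξ η ((H : Set G) ∩ (N / N))) {x : G}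
    (hx : ∃ h ∈ H, h⁻¹ * x ∈ N) : ContinuousAt (sectionExtension ξ η H N) x := by
  obtain ⟨h, hh, hhx⟩ := hx
  have htranslate : ContinuousAt (fun y => ξ h * η (h⁻¹ * y)) x :=
    continuousAt_const.mul ((hηcont.continuousAt (hUopen.mem_nhds
      (hNU (subset_div_left h1N hhx)))).comp (continuous_const_mul _).continuousAt)
  have hnhds : {y | h⁻¹ * y ∈ N} ∈ 𝓝 x :=
    (hNopen.preimage (continuous_const_mul _)).mem_nhds hhx
  exact htranslate.congr (eventuallyEq_of_mem hnhds fun y hy =>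
    (sectionExtension_eq hξ hη h1N hNU hagree hh hy).symm)

end Extension

theorem exists_open_nhds_one_div_subset {G : Type*} [Group G] [TopologicalSpace G]
    [IsTopologicalGroup G] {O : Set G} (hO : O ∈ 𝓝 1) :
    ∃ N : Set G, IsOpen N ∧ 1 ∈ N ∧ N / N ⊆ O := by
  obtain ⟨V, hVopen, hV1, hVV⟩ := exists_open_nhds_one_mul_subset hO
  refine ⟨V ∩ V⁻¹, hVopen.inter hVopen.inv, ⟨hV1, by simpa using hV1⟩, ?_⟩
  rw [div_eq_mul_inv, inter_inv, inv_inv]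
  exact (mul_subset_mul inter_subset_left inter_subset_right).trans hVV

theorem exists_inv_mul_mem_of_mem_closure {G : Type*} [Group G] [TopologicalSpace G]
    [IsTopologicalGroup G] {s N : Set G} {x : G} (hx : x ∈ closure s) (hN : N ∈ 𝓝 1) :
    ∃ h ∈ s, h⁻¹ * x ∈ N := by
  have hlim : Tendsto (fun h => h⁻¹ * x) (𝓝 x) (𝓝 1) := by
    have hcont : Continuous fun h : G => h⁻¹ * x := continuous_inv.mul continuous_const
    simpa using hcont.tendsto x
  obtain ⟨h, hhN, hhs⟩ := mem_closure_iff_nhds.mp hx _ (hlim hN)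
  exact ⟨h, hhs, hhN⟩

theorem eq_of_continuousAt_of_eqOn_of_isDiscrete {X Y : Type*} [TopologicalSpace X]
    [TopologicalSpace Y] {K : Set Y} (hK : IsDiscrete K) {f : X → Y} {T : Set X} {x : X}
    {c : Y} (hf : ContinuousAt f x) (hfx : f x ∈ K) (hc : c ∈ K)
    (hfT : EqOn f (fun _ => c) T) (hxT : x ∈ closure T) : f x = c := by
  have := mem_closure_iff_nhdsWithin_neBot.mp hxT
  have hconst : ∀ᶠ y in 𝓝[T] x, f y = c := eventually_nhdsWithin_of_forall hfT
  have hlim : Tendsto f (𝓝[T] x) (𝓝[K] (f x)) :=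
    tendsto_nhdsWithin_of_tendsto_nhds_of_eventually_within _ (hf.mono_left nhdsWithin_le_nhds)
      (hconst.mono fun y hy => hy ▸ hc)
  rw [hK.nhdsWithin _ hfx, tendsto_pure] at hlim
  obtain ⟨y, hyx, hyc⟩ := (hlim.and hconst).exists
  exact hyx.symm.trans hyc

theorem IsSectionOn.topologicalClosure {E G : Type*} [Group E] [TopologicalSpace E]
    [IsTopologicalGroup E] [Group G] [TopologicalSpace G] [IsTopologicalGroup G] {ρ : E →* G}
    (hdisc : DiscreteTopology ρ.ker) {s : G → E} {H : Subgroup G} (hs : IsSectionOn ρ s H)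
    (hρs : ∀ x ∈ closure (H : Set G), ρ (s x) = x)
    (hcont : ∀ x ∈ closure (H : Set G), ContinuousAt s x) :
    IsSectionOn ρ s H.topologicalClosure := by
  refine ⟨hρs, fun x hx y hy => ?_⟩
  set defect : G × G → E := fun p => (s (p.1 * p.2))⁻¹ * (s p.1 * s p.2)
  have hxy : x * y ∈ closure (H : Set G) := H.topologicalClosure.mul_mem hx hy
  have hker : defect (x, y) ∈ ρ.ker := by
    simp [defect, hρs _ hx, hρs _ hy, hρs _ hxy]
  have hcontxy : ContinuousAt defect (x, y) :=
    ((hcont _ hxy).comp (f := fun p : G × G => p.1 * p.2) continuous_mul.continuousAt).inv.mul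
      (((hcont _ hx).comp continuousAt_fst).mul ((hcont _ hy).comp continuousAt_snd))
  have hdefectH : EqOn defect (fun _ => 1) ((H : Set G) ×ˢ (H : Set G)) := by
    rintro ⟨a, b⟩ ⟨ha, hb⟩
    simp [defect, hs.2 a ha b hb]
  have hclosure : (x, y) ∈ closure ((H : Set G) ×ˢ (H : Set G)) := by
    rw [closure_prod_eq]; exact ⟨hx, hy⟩
  have h1 := eq_of_continuousAt_of_eqOn_of_isDiscrete
    (SetLike.isDiscrete_iff_discreteTopology.mpr hdisc) hcontxy hker ρ.ker.one_mem hdefectH hclosure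
  exact inv_mul_eq_one.mp h1

theorem section_extends_to_closure_general {E G : Type*}
    [Group E] [TopologicalSpace E] [IsTopologicalGroup E]
    [Group G] [TopologicalSpace G] [IsTopologicalGroup G]
    (ρ : E →* G)
    (hdisc : DiscreteTopology ρ.ker)
    (U : Subgroup G) (hUopen : IsOpen (U : Set G))
    (η : G → E) (hη : IsSectionOn ρ η U) (hηcont : ContinuousOn η U)
    (D : Subgroup G)
    (ξ : G → E) (hξ : IsSectionOn ρ ξ D)
    (H : Subgroup G) (hHD : H ≤ D)
    (V : Subgroup G)
    (hVopen : ∃ W : Set G, IsOpen W ∧ (V : Set G) = (H : Set G) ∩ W)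
    (hagree : ∀ v ∈ V, ξ v = η v) :
    ∃ s : G → E, IsSectionOn ρ s H.topologicalClosure ∧
      ContinuousOn s (closure (H : Set G)) ∧ ∀ x ∈ H, s x = ξ x := by
  obtain ⟨W, hWopen, hVW⟩ := hVopen
  have h1W : (1 : G) ∈ W := ((hVW ▸ V.one_mem : (1 : G) ∈ (H : Set G) ∩ W)).2
  obtain ⟨N, hNopen, h1N, hNWU⟩ :=
    exists_open_nhds_one_div_subset ((hWopen.inter hUopen).mem_nhds ⟨h1W, U.one_mem⟩)
  have hNU : N / N ⊆ U := fun x hx => (hNWU hx).2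
  have hξH : IsSectionOn ρ ξ H := hξ.mono hHD
  have hagreeN : EqOn ξ η ((H : Set G) ∩ (N / N)) := fun x ⟨hxH, hxN⟩ =>
    hagree x (by rw [← SetLike.mem_coe, hVW]; exact ⟨hxH, (hNWU hxN).1⟩)
  have hcover : ∀ x ∈ closure (H : Set G), ∃ h ∈ H, h⁻¹ * x ∈ N := fun x hx =>
    exists_inv_mul_mem_of_mem_closure hx (hNopen.mem_nhds h1N)
  have hcont : ∀ x ∈ closure (H : Set G), ContinuousAt (sectionExtension ξ η H N) x :=
    fun x hx => continuousAt_sectionExtension hξH hη hUopen hηcont hNopen h1N hNU hagreeN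
      (hcover x hx)
  have hextends : ∀ x ∈ H, sectionExtension ξ η H N x = ξ x := fun x hx =>
    sectionExtension_of_mem hξH hη h1N hNU hagreeN hx
  refine ⟨sectionExtension ξ η H N, ?_, fun x hx => (hcont x hx).continuousWithinAt, hextends⟩
  exact (hξH.congr fun x hx => (hextends x hx).symm).topologicalClosure hdisc
    (fun x hx => map_sectionExtension hξH hη h1N hNU hagreeN (hcover x hx)) hcont

/-- let `1 → C → E → G → 1` be a topological central extension with discrete
kernel, `η` a continuous section over an open subgroup `U ≤ G` and `ξ` an abstract section
over a dense subgroup `D ≤ G`.  If `ξ` and `η` agree on a (relatively) open subgroup `V` of a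
subgroup `H ≤ D`, then `ξ` restricted to `H` extends to a continuous section over the closure
of `H` in `G`. -/
theorem section_extends_to_closure {E G : Type*}
    [Group E] [TopologicalSpace E] [IsTopologicalGroup E]
    [Group G] [TopologicalSpace G] [IsTopologicalGroup G]
    (ρ : E →* G) (hρcont : Continuous ρ) (hsurj : Function.Surjective ρ)
    (hcentral : ρ.ker ≤ Subgroup.center E) (hdisc : DiscreteTopology ρ.ker)
    (U : Subgroup G) (hUopen : IsOpen (U : Set G))
    (η : G → E) (hη : IsSectionOn ρ η U) (hηcont : ContinuousOn η U)
    (D : Subgroup G) (hDdense : Dense (D : Set G))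
    (ξ : G → E) (hξ : IsSectionOn ρ ξ D)
    (H : Subgroup G) (hHD : H ≤ D)
    (V : Subgroup G) (hVH : V ≤ H) (hVU : V ≤ U)
    (hVopen : ∃ W : Set G, IsOpen W ∧ (V : Set G) = (H : Set G) ∩ W)
    (hagree : ∀ v ∈ V, ξ v = η v) :
    ∃ s : G → E, IsSectionOn ρ s H.topologicalClosure ∧
      ContinuousOn s (closure (H : Set G)) ∧ ∀ x ∈ H, s x = ξ x :=
  section_extends_to_closure_general ρ hdisc U hUopen η hη hηcont D ξ hξ H hHD V hVopen hagree
end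

section
/- Let O be a Dedekind domain in which every ideal is generated by two elements, and let O* be an ultrapower of O over a non-principal ultrafilter on ℕ. Then a subset A ⊆ O* is a finitely generated ideal of O* if and only if A = [q_n]_n for some sequence (q_n) of ideals of O; moreover, every finitely generated ideal of O* is generated by two elements. -/
open Filter

/-- For a sequence of subsets `s n ⊆ O`, the internal subset `[s_n]_n` of the ultrapower:
germs admitting a representative `f` with `f n ∈ s n` for `U`-almost all `n`. -/
def germSet {O : Type*} (U : Ultrafilter ℕ) (s : ℕ → Set O) :
    Set (Filter.Germ (U : Filter ℕ) O) :=
  {x | ∃ f : ℕ → O, x = (↑f : Filter.Germ (U : Filter ℕ) O) ∧ ∀ᶠ n in (U : Filter ℕ), f n ∈ s n}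

section Aux

variable {O : Type*} [CommRing O] {U : Ultrafilter ℕ}

private lemma coe_surj :
    Function.Surjective ((↑) : (ℕ → O) → Filter.Germ (U : Filter ℕ) O) :=
  fun x => Filter.Germ.inductionOn x fun f => ⟨f, rfl⟩

private lemma pointwise_span_mem {P : Finset (ℕ → O)} {g : ℕ → O}
    (hg : g ∈ Ideal.span (↑P : Set (ℕ → O))) (n : ℕ) :
    g n ∈ Ideal.span ((fun t => t n) '' (↑P : Set (ℕ → O))) := by
  have := Ideal.mem_map_of_mem (Pi.evalRingHom (fun _ : ℕ => O) n) hg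
  rwa [Ideal.map_span] at this

private lemma mem_span_of_pointwise (P : Finset (ℕ → O)) (f : ℕ → O)
    (hf : ∀ n, f n ∈ Ideal.span ((fun t => t n) '' (↑P : Set (ℕ → O)))) :
    f ∈ Ideal.span (↑P : Set (ℕ → O)) := by
  classical
  induction P using Finset.induction_on generalizing f with
  | empty =>
      have : f = 0 := funext fun n => by simpa using hf n
      simp [this]
  | @insert a P ht ih =>
      have key : ∀ n, ∃ c r, r ∈ Ideal.span ((fun t => t n) '' (↑P : Set (ℕ → O))) ∧
          f n = c * a n + r := by
        intro n
        have h := hf n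
        rw [Finset.coe_insert, Set.image_insert_eq, Ideal.span_insert] at h
        obtain ⟨y, hy, z, hz, hyz⟩ := Submodule.mem_sup.mp h
        obtain ⟨c, hc⟩ := Ideal.mem_span_singleton'.mp hy
        exact ⟨c, z, hz, by rw [← hyz, hc]⟩
      choose c r hr hfr using key
      have hfeq : f = c * a + r := funext fun n => by simpa using hfr n
      rw [hfeq, Finset.coe_insert]
      refine Ideal.add_mem _ (Ideal.mul_mem_left _ _ ?_)
        (Ideal.span_mono (Set.subset_insert _ _) (ih r hr))
      exact Ideal.subset_span (Set.mem_insert _ _)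

private lemma span_image_coe (U : Ultrafilter ℕ) (P : Finset (ℕ → O)) :
    ((Ideal.span (((↑) : (ℕ → O) → Filter.Germ (U : Filter ℕ) O) '' ↑P)) : Set _)
      = germSet U (fun n => (Ideal.span ((fun t => t n) '' (↑P : Set (ℕ → O))) : Set O)) := by
  classical
  have hmap : Ideal.span (((↑) : (ℕ → O) → Filter.Germ (U : Filter ℕ) O) '' ↑P)
      = Ideal.map (Filter.Germ.coeRingHom (U : Filter ℕ)) (Ideal.span (↑P : Set (ℕ → O))) := by
    rw [Ideal.map_span, Filter.Germ.coe_coeRingHom]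
  ext x
  constructor
  · intro hx
    rw [SetLike.mem_coe, hmap, Ideal.mem_map_iff_of_surjective _ coe_surj] at hx
    obtain ⟨g, hg, rfl⟩ := hx
    exact ⟨g, rfl, Eventually.of_forall fun n => pointwise_span_mem hg n⟩
  · rintro ⟨f, rfl, hf⟩
    set f' : ℕ → O := fun n =>
      if f n ∈ Ideal.span ((fun t => t n) '' (↑P : Set (ℕ → O))) then f n else 0 with hf'def
    have h1 : (↑f : Filter.Germ (U : Filter ℕ) O) = ↑f' :=
      Filter.Germ.coe_eq.mpr (hf.mono fun n hn => (if_pos hn).symm)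
    have h2 : f' ∈ Ideal.span (↑P : Set (ℕ → O)) := by
      refine mem_span_of_pointwise P f' fun n => ?_
      by_cases h : f n ∈ Ideal.span ((fun t => t n) '' (↑P : Set (ℕ → O))) <;>
        simp [hf'def, h]
    rw [SetLike.mem_coe, h1, hmap]
    exact Ideal.mem_map_of_mem _ h2

end Aux

/-- let `O` be a Dedekind domain in which every ideal is generated by two
elements and `O*` its ultrapower over a non-principal ultrafilter on `ℕ`.  A subset
`A ⊆ O*` is (the carrier of) a finitely generated ideal of `O*` iff `A = [q_n]_n` for some
sequence `(q_n)` of ideals of `O`; moreover every finitely generated ideal of `O*` is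
generated by two elements. -/
theorem fg_ideal_ultrapower_iff_internal
    (O : Type*) [CommRing O] [IsDomain O] [IsDedekindDomain O]
    (h2 : ∀ I : Ideal O, ∃ a b : O, I = Ideal.span {a, b})
    (U : Ultrafilter ℕ) (hU : ∀ a : ℕ, (U : Filter ℕ) ≠ pure a)
    (A : Set (Filter.Germ (U : Filter ℕ) O)) :
    ((∃ I : Ideal (Filter.Germ (U : Filter ℕ) O), I.FG ∧ A = (I : Set _)) ↔
      (∃ q : ℕ → Ideal O, A = germSet U (fun n => ((q n : Set O))))) ∧
    (∀ I : Ideal (Filter.Germ (U : Filter ℕ) O), I.FG →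
      ∃ a b : Filter.Germ (U : Filter ℕ) O, I = Ideal.span {a, b}) := by
  classical
  -- every FG ideal has an internal description
  have fwd : ∀ I : Ideal (Filter.Germ (U : Filter ℕ) O), I.FG →
      ∃ q : ℕ → Ideal O, (I : Set _) = germSet U (fun n => ((q n : Set O))) := by
    intro I hI
    obtain ⟨s, hs⟩ := hI
    choose rep hrep using (coe_surj (O := O) (U := U))
    set P : Finset (ℕ → O) := s.image rep with hP
    have himg : ((↑) : (ℕ → O) → Filter.Germ (U : Filter ℕ) O) '' ↑P = ↑s := by
      rw [hP, Finset.coe_image, ← Set.image_comp]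
      ext x
      simp only [Set.mem_image, Function.comp]
      constructor
      · rintro ⟨y, hy, rfl⟩; rwa [hrep]
      · intro hx; exact ⟨x, hx, hrep x⟩
    refine ⟨fun n => Ideal.span ((fun t => t n) '' (↑P : Set (ℕ → O))), ?_⟩
    rw [← hs, ← himg]
    exact span_image_coe U P
  -- every internal set of ideals is the carrier of an ideal generated by two elements
  have bwd : ∀ q : ℕ → Ideal O, ∃ a b : Filter.Germ (U : Filter ℕ) O,
      germSet U (fun n => ((q n : Set O))) = (Ideal.span {a, b} : Ideal _) := by
    intro q
    choose a b hab using fun n => h2 (q n)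
    refine ⟨↑a, ↑b, ?_⟩
    have := span_image_coe U ({a, b} : Finset (ℕ → O))
    have himg : ((↑) : (ℕ → O) → Filter.Germ (U : Filter ℕ) O) '' ↑({a, b} : Finset (ℕ → O))
        = {↑a, ↑b} := by
      simp [Set.image_insert_eq]
    have hq : ∀ n, Ideal.span ((fun t => t n) '' (↑({a, b} : Finset (ℕ → O)) : Set (ℕ → O)))
        = q n := by
      intro n
      have : ((fun t => t n) '' (↑({a, b} : Finset (ℕ → O)) : Set (ℕ → O)))
          = {a n, b n} := by
        simp [Set.image_insert_eq]
      rw [this, ← hab n]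
    rw [himg] at this
    simp only [hq] at this
    exact this.symm
  constructor
  · constructor
    · rintro ⟨I, hI, rfl⟩
      exact fwd I hI
    · rintro ⟨q, rfl⟩
      obtain ⟨a, b, hab⟩ := bwd q
      exact ⟨Ideal.span {a, b}, Submodule.fg_span ((Set.finite_singleton _).insert _), hab⟩
  · intro I hI
    obtain ⟨q, hq⟩ := fwd I hI
    obtain ⟨a, b, hab⟩ := bwd q
    exact ⟨a, b, SetLike.ext' (hq.trans hab)⟩
end

section
/- Let D be a finite-dimensional central division algebra over a field, and n ≥ 3. Then the elementary subgroup E_n(D) equals the commutator subgroup of GL_n(D). -/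
/-!
An elementary matrix `e_ij(a)` is the commutator `⁅e_ik(a), e_kj(1)⁆` for any third index `k`,
so `E_n(D) ≤ [GL_n(D), GL_n(D)]` once `n ≥ 3`.

Conversely, two-sided Gaussian elimination writes every `g ∈ GL_n(D)` as `e * diag(d) * e'`
with `e, e' ∈ E_n(D)`. Conjugating an elementary matrix by a diagonal one gives an elementary
matrix, so `E_n(D)` is normal and every matrix is diagonal modulo `E_n(D)`. Hence a commutator
`⁅g, h⁆` is congruent to a diagonal matrix whose entries are commutators in `Dˣ`, and such a
matrix is a product of matrices `diag(…, x, …, x⁻¹, …)`, which lie in `E_n(D)` by Whitehead's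
lemma `diag(x, x⁻¹) = w(x) w(-1)` with `w(x) = e_12(x) e_21(-x⁻¹) e_12(x)`.
-/

open Matrix

def elemSet (D : Type*) [Ring D] (n : ℕ) : Set ((Matrix (Fin n) (Fin n) D)ˣ) :=
  {u | ∃ i j : Fin n, i ≠ j ∧ ∃ a : D,
    u.val = 1 + Matrix.single i j a}

open scoped commutatorElement

theorem Pi.mulSingle_commutatorElement {ι G : Type*} [DecidableEq ι] [Group G] {i j : ι}
    (hji : j ≠ i) (a b : G) :
    (Pi.mulSingle i ⁅a, b⁆ : ι → G) =
      (Pi.mulSingle i (a * b) * Pi.mulSingle j (a * b)⁻¹) *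
        (Pi.mulSingle i a * Pi.mulSingle j a⁻¹)⁻¹ * (Pi.mulSingle i b * Pi.mulSingle j b⁻¹)⁻¹ := by
  funext k
  rcases eq_or_ne k i with rfl | hki
  · simp [hji, commutatorElement_def]
  · rcases eq_or_ne k j with rfl | hkj
    · simp [hki]
    · simp [hki, hkj]

theorem commutator_pi_le_of_mulSingle_mul_mulSingle_inv_mem {ι G : Type*} [Finite ι]
    [DecidableEq ι] [Nontrivial ι] [Group G] {H : Subgroup (ι → G)}
    (hH : ∀ i j, j ≠ i → ∀ x : G, Pi.mulSingle i x * Pi.mulSingle j x⁻¹ ∈ H) :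
    commutator (ι → G) ≤ H := by
  rw [commutator_def, Subgroup.commutator_le]
  rintro f - g -
  refine Subgroup.pi_mem_of_mulSingle_mem _ fun i => ?_
  obtain ⟨j, hji⟩ := exists_ne i
  rw [show ⁅f, g⁆ i = ⁅f i, g i⁆ from rfl, Pi.mulSingle_commutatorElement hji]
  exact mul_mem (mul_mem (hH i j hji _) (inv_mem (hH i j hji _))) (inv_mem (hH i j hji _))

namespace Matrix

section Ring

variable {m R : Type*} [Fintype m] [DecidableEq m] [Ring R]

theorem one_add_single_mul_one_add_single {i j : m} (h : i ≠ j) (a b : R) :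
    (1 + single i j a) * (1 + single i j b) = 1 + single i j (a + b) := by
  rw [add_mul, one_mul, mul_add, mul_one, single_mul_single_of_ne _ _ _ _ h.symm, single_add]
  abel

def elemUnit {i j : m} (h : i ≠ j) (a : R) : GL m R where
  val := 1 + single i j a
  inv := 1 + single i j (-a)
  val_inv := by rw [one_add_single_mul_one_add_single h, add_neg_cancel, single_zero, add_zero]
  inv_val := by rw [one_add_single_mul_one_add_single h, neg_add_cancel, single_zero, add_zero]

@[simp]
theorem val_elemUnit {i j : m} (h : i ≠ j) (a : R) : (elemUnit h a).val = 1 + single i j a :=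
  rfl

theorem elemUnit_inv {i j : m} (h : i ≠ j) (a : R) : (elemUnit h a)⁻¹ = elemUnit h (-a) :=
  Units.ext rfl

theorem elemUnit_eq_commutatorElement {i j k : m} (hij : i ≠ j) (hik : i ≠ k) (hkj : k ≠ j)
    (a : R) : elemUnit hij a = ⁅elemUnit hik a, elemUnit hkj 1⁆ := by
  rw [commutatorElement_def, elemUnit_inv, elemUnit_inv]
  ext1
  simp only [Units.val_mul, val_elemUnit, add_mul, mul_add, one_mul, mul_one,
    single_mul_single_same, single_mul_single_of_ne _ _ _ _ hij.symm,
    single_mul_single_of_ne _ _ _ _ hik.symm, single_mul_single_of_ne _ _ _ _ hkj.symm,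
    add_zero, mul_neg, neg_mul, ← single_neg]
  abel

def diagUnits : (m → Rˣ) →* GL m R :=
  (Units.map (diagonalRingHom m R).toMonoidHom).comp MulEquiv.piUnits.symm.toMonoidHom

@[simp]
theorem val_diagUnits (d : m → Rˣ) : (diagUnits d).val = diagonal fun i => (d i : R) :=
  rfl

theorem exists_eq_diagUnits_of_isDiag {g : GL m R} (hg : g.val.IsDiag) : ∃ d, g = diagUnits d := by
  have hdiag := hg.diagonal_diag
  have hright : ∀ i, g.val i i * (g⁻¹).val i i = 1 := fun i => by
    have := congrFun (congrFun g.mul_inv i) i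
    rwa [← hdiag, diagonal_mul, one_apply_eq] at this
  have hleft : ∀ i, (g⁻¹).val i i * g.val i i = 1 := fun i => by
    have := congrFun (congrFun g.inv_mul i) i
    rwa [← hdiag, mul_diagonal, one_apply_eq] at this
  exact ⟨fun i => ⟨g.val i i, (g⁻¹).val i i, hright i, hleft i⟩, Units.ext hdiag.symm⟩

theorem exists_val_apply_ne_zero [Nontrivial R] (g : GL m R) (k : m) : ∃ i, g.val i k ≠ 0 := by
  by_contra! h
  have h1 := congrFun (congrFun g.inv_mul k) k
  rw [mul_apply, Finset.sum_eq_zero fun i _ => by rw [h i, mul_zero], one_apply_eq] at h1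
  exact zero_ne_one h1

theorem val_elemUnit_mul_elemUnit_mul_elemUnit {i j : m} (hij : i ≠ j) (y : Rˣ) :
    (elemUnit hij (y : R) * elemUnit hij.symm (-((y⁻¹ : Rˣ) : R)) * elemUnit hij (y : R)).val =
      1 + single i j (y : R) + single j i (-((y⁻¹ : Rˣ) : R)) + single i i (-1) +
        single j j (-1) := by
  simp only [Units.val_mul, val_elemUnit, add_mul, mul_add, one_mul, mul_one,
    single_mul_single_same, single_mul_single_of_ne _ _ _ _ hij.symm, mul_neg, neg_mul,
    Units.mul_inv, Units.inv_mul, add_zero, ← single_neg]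
  abel

theorem diagUnits_mulSingle_mul_mulSingle_inv {i j : m} (hij : i ≠ j) (x : Rˣ) :
    diagUnits (Pi.mulSingle i x * Pi.mulSingle j x⁻¹) =
      (elemUnit hij (x : R) * elemUnit hij.symm (-((x⁻¹ : Rˣ) : R)) * elemUnit hij (x : R)) *
        (elemUnit hij (-1) * elemUnit hij.symm 1 * elemUnit hij (-1)) := by
  have hw_neg_one := val_elemUnit_mul_elemUnit_mul_elemUnit hij (-1 : Rˣ)
  simp only [Units.val_neg, Units.val_one, inv_neg, inv_one, neg_neg] at hw_neg_one
  ext1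
  rw [Units.val_mul, val_elemUnit_mul_elemUnit_mul_elemUnit, hw_neg_one]
  have hmul : (1 + single i j (x : R) + single j i (-((x⁻¹ : Rˣ) : R)) + single i i (-1) +
      single j j (-1)) * (1 + single i j (-1) + single j i 1 + single i i (-1) + single j j (-1)) =
      1 + single i i ((x : R) - 1) + single j j (((x⁻¹ : Rˣ) : R) - 1) := by
    simp only [add_mul, mul_add, one_mul, mul_one, single_mul_single_same,
      single_mul_single_of_ne _ _ _ _ hij, single_mul_single_of_ne _ _ _ _ hij.symm, mul_neg,
      neg_mul, add_zero, sub_eq_add_neg, single_add, ← single_neg]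
    abel
  rw [hmul]
  ext p q
  rcases eq_or_ne p q with rfl | hpq
  · rcases eq_or_ne p i with rfl | hpi
    · simp [hij.symm]
    rcases eq_or_ne p j with rfl | hpj
    · simp [hpi, hpi.symm]
    · simp [hpi, hpj, hpi.symm, hpj.symm]
  · simp [hpq, single_apply]
    grind

theorem one_add_vecMulVec_mul_apply (u v : m → R) (A : Matrix m m R) (a b : m) :
    ((1 + vecMulVec u v) * A) a b = A a b + u a * (v ᵥ* A) b := by
  rw [add_mul, one_mul, vecMulVec_mul, add_apply, vecMulVec_apply]

theorem mul_one_add_vecMulVec_apply (u v : m → R) (A : Matrix m m R) (a b : m) :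
    (A * (1 + vecMulVec u v)) a b = A a b + (A *ᵥ u) a * v b := by
  rw [mul_add, mul_one, mul_vecMulVec, add_apply, vecMulVec_apply]

end Ring

section ElementarySubgroup

variable {R : Type*} [Ring R] {n : ℕ}

variable (R n) in
def elementarySubgroup : Subgroup (GL (Fin n) R) :=
  Subgroup.closure (elemSet R n)

theorem elemUnit_mem {i j : Fin n} (h : i ≠ j) (a : R) : elemUnit h a ∈ elementarySubgroup R n :=
  Subgroup.subset_closure ⟨i, j, h, a, rfl⟩

theorem elementarySubgroup_le_commutator (hn : 3 ≤ n) :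
    elementarySubgroup R n ≤ commutator (GL (Fin n) R) := by
  rw [elementarySubgroup, Subgroup.closure_le]
  rintro u ⟨i, j, hij, a, hu⟩
  obtain ⟨k, hki, hkj⟩ := Fin.exists_ne_and_ne_of_two_lt i j hn
  rw [show u = elemUnit hij a from Units.ext hu, elemUnit_eq_commutatorElement hij hki.symm hkj]
  exact Subgroup.commutator_mem_commutator (Subgroup.mem_top _) (Subgroup.mem_top _)

theorem diagUnits_mulSingle_mul_mulSingle_inv_mem {i j : Fin n} (hij : i ≠ j) (x : Rˣ) :
    diagUnits (Pi.mulSingle i x * Pi.mulSingle j x⁻¹) ∈ elementarySubgroup R n := by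
  rw [diagUnits_mulSingle_mul_mulSingle_inv hij]
  exact mul_mem (mul_mem (mul_mem (elemUnit_mem _ _) (elemUnit_mem _ _)) (elemUnit_mem _ _))
    (mul_mem (mul_mem (elemUnit_mem _ _) (elemUnit_mem _ _)) (elemUnit_mem _ _))

theorem diagUnits_mul_mul_inv_mem (d : Fin n → Rˣ) {u : GL (Fin n) R}
    (hu : u ∈ elementarySubgroup R n) :
    diagUnits d * u * (diagUnits d)⁻¹ ∈ elementarySubgroup R n := by
  suffices elementarySubgroup R n ≤
      (elementarySubgroup R n).comap (MulAut.conj (diagUnits d)).toMonoidHom from this hu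
  rw [elementarySubgroup, Subgroup.closure_le]
  rintro u ⟨i, j, hij, a, hu⟩
  refine Subgroup.subset_closure ⟨i, j, hij, d i * a * ((d j)⁻¹ : Rˣ), ?_⟩
  rw [MulEquiv.coe_toMonoidHom, MulAut.conj_apply, ← map_inv, Units.val_mul, Units.val_mul, hu,
    val_diagUnits, val_diagUnits, mul_add, mul_one, add_mul, diagonal_mul_diagonal]
  congr 1
  · simp
  · ext p q
    simp only [diagonal_mul, mul_diagonal, single_apply]
    split_ifs with h
    · obtain ⟨rfl, rfl⟩ := h
      rfl
    · simp

/-- Matrices whose entries all lead from `S` to its complement multiply pairwise to zero, so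
`1 + N` is the product of the elementary matrices `1 + single i j (N i j)`. -/
theorem exists_val_eq_one_add_of_support (S : Set (Fin n)) {N : Matrix (Fin n) (Fin n) R}
    (hN : ∀ i j, i ∉ S ∨ j ∈ S → N i j = 0) :
    ∃ u ∈ elementarySubgroup R n, u.val = 1 + N := by
  let P : Matrix (Fin n) (Fin n) R → Prop := fun M =>
    (∀ i j, i ∉ S ∨ j ∈ S → M i j = 0) ∧ ∃ u ∈ elementarySubgroup R n, u.val = 1 + M
  have hzero : P 0 := ⟨fun _ _ _ => rfl, 1, one_mem _, by simp⟩
  have hadd : ∀ M M', P M → P M' → P (M + M') := by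
    rintro M M' ⟨hM, u, hu, hval⟩ ⟨hM', u', hu', hval'⟩
    refine ⟨fun i j h => ?_, u * u', mul_mem hu hu', ?_⟩
    · rw [add_apply, hM i j h, hM' i j h, add_zero]
    have hMM' : M * M' = 0 := by
      ext a b
      rw [mul_apply, zero_apply]
      refine Finset.sum_eq_zero fun c _ => ?_
      by_cases hc : c ∈ S
      · rw [hM a c (Or.inr hc), zero_mul]
      · rw [hM' c b (Or.inl hc), mul_zero]
    rw [Units.val_mul, hval, hval', add_mul, one_mul, mul_add, mul_one, hMM', add_zero]
    abel
  have hsingle : ∀ i j, P (single i j (N i j)) := by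
    intro i j
    by_cases h : i ∉ S ∨ j ∈ S
    · rw [hN i j h, single_zero]
      exact hzero
    · rw [not_or, not_not] at h
      have hij : i ≠ j := fun e => h.2 (e ▸ h.1)
      refine ⟨fun a b hab => ?_, elemUnit hij _, elemUnit_mem _ _, rfl⟩
      rw [single_apply, if_neg]
      rintro ⟨rfl, rfl⟩
      tauto
  have hP : P (∑ i, ∑ j, single i j (N i j)) := Finset.sum_induction _ P hadd hzero fun i _ =>
    Finset.sum_induction _ P hadd hzero fun j _ => hsingle i j
  rw [← matrix_eq_sum_single N] at hP
  exact hP.2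

theorem exists_val_eq_one_add_vecMulVec_single_left (k : Fin n) {r : Fin n → R} (hr : r k = 0) :
    ∃ u ∈ elementarySubgroup R n, u.val = 1 + vecMulVec (Pi.single k 1) r := by
  refine exists_val_eq_one_add_of_support {k} fun i j h => ?_
  rcases h with hi | rfl
  · rw [vecMulVec_apply, Pi.single_eq_of_ne hi, zero_mul]
  · rw [vecMulVec_apply, hr, mul_zero]

theorem exists_val_eq_one_add_vecMulVec_single_right (k : Fin n) {c : Fin n → R} (hc : c k = 0) :
    ∃ u ∈ elementarySubgroup R n, u.val = 1 + vecMulVec c (Pi.single k 1) := by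
  refine exists_val_eq_one_add_of_support {k}ᶜ fun i j h => ?_
  rcases h with hi | hj
  · rw [vecMulVec_apply, not_not.mp hi, hc, zero_mul]
  · rw [vecMulVec_apply, Pi.single_eq_of_ne hj, mul_zero]

end ElementarySubgroup

def ClearedUpTo {α : Type*} [Zero α] {n : ℕ} (k : ℕ) (A : Matrix (Fin n) (Fin n) α) : Prop :=
  ∀ i j : Fin n, i ≠ j → ((i : ℕ) < k ∨ (j : ℕ) < k) → A i j = 0

theorem clearedUpTo_zero {α : Type*} [Zero α] {n : ℕ} (A : Matrix (Fin n) (Fin n) α) :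
    ClearedUpTo 0 A :=
  fun _ _ _ h => by omega

theorem ClearedUpTo.isDiag {α : Type*} [Zero α] {n : ℕ} {A : Matrix (Fin n) (Fin n) α}
    (h : ClearedUpTo n A) : A.IsDiag :=
  fun i j hij => h i j hij (Or.inl i.2)

section DivisionRing

variable {D : Type*} [DivisionRing D] {n : ℕ}

theorem exists_clearedUpTo_mul_apply_self_ne_zero {g : GL (Fin n) D} {k : Fin n}
    (hg : ClearedUpTo k g.val) :
    ∃ e ∈ elementarySubgroup D n, ClearedUpTo k (e * g).val ∧ (e * g).val k k ≠ 0 := by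
  by_cases hp : g.val k k ≠ 0
  · exact ⟨1, one_mem _, by rwa [one_mul], by rwa [one_mul]⟩
  obtain ⟨i, hi⟩ := exists_val_apply_ne_zero g k
  have hik : i ≠ k := by
    rintro rfl
    exact hp hi
  have hki : (k : ℕ) ≤ i := not_lt.mp fun h => hi (hg i k hik (Or.inl h))
  obtain ⟨e, he, hval⟩ := exists_val_eq_one_add_vecMulVec_single_left k (r := Pi.single i (1 : D))
    (Pi.single_eq_of_ne hik.symm _)
  have hentry : ∀ a b,
      (e * g).val a b = g.val a b + (Pi.single k 1 : Fin n → D) a * g.val i b := fun a b => by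
    rw [Units.val_mul, hval, one_add_vecMulVec_mul_apply, single_one_vecMul, row_apply]
  refine ⟨e, he, fun a b hab hlt => ?_, ?_⟩
  · rw [hentry, hg a b hab hlt, zero_add]
    rcases eq_or_ne a k with rfl | hak
    · have hb : (b : ℕ) < a := hlt.resolve_left (lt_irrefl _)
      rw [hg i b (by rintro rfl; omega) (Or.inr hb), mul_zero]
    · rw [Pi.single_eq_of_ne hak, zero_mul]
  · rwa [hentry, Pi.single_eq_same, one_mul, not_not.mp hp, zero_add]

theorem exists_clearedUpTo_mul_col {A : Matrix (Fin n) (Fin n) D} {k : Fin n}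
    (hA : ClearedUpTo k A) (hp : A k k ≠ 0) :
    ∃ e ∈ elementarySubgroup D n, ClearedUpTo k (e.val * A) ∧
      (∀ i ≠ k, (e.val * A) i k = 0) ∧ (e.val * A) k k = A k k := by
  set c : Fin n → D := Function.update (fun a => -(A a k * (A k k)⁻¹)) k 0
  have hc : ∀ a ≠ k, c a = -(A a k * (A k k)⁻¹) := fun a ha => Function.update_of_ne ha _ _
  obtain ⟨e, he, hval⟩ := exists_val_eq_one_add_vecMulVec_single_right k (c := c) (by simp [c])
  have hentry : ∀ a b, (e.val * A) a b = A a b + c a * A k b := fun a b => by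
    rw [hval, one_add_vecMulVec_mul_apply, single_one_vecMul, row_apply]
  refine ⟨e, he, fun a b hab hlt => ?_, fun a ha => ?_, by simp [hentry, c]⟩
  · rw [hentry, hA a b hab hlt, zero_add]
    rcases eq_or_ne a k with rfl | hak
    · simp [c]
    rcases hlt with ha | hb
    · rw [hc a hak, hA a k hak (Or.inl ha), zero_mul, neg_zero, zero_mul]
    · rw [hA k b (by rintro rfl; omega) (Or.inr hb), mul_zero]
  · rw [hentry, hc a ha, neg_mul, mul_assoc, inv_mul_cancel₀ hp, mul_one, add_neg_cancel]

theorem exists_clearedUpTo_succ_mul_row {A : Matrix (Fin n) (Fin n) D} {k : Fin n}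
    (hA : ClearedUpTo k A) (hcol : ∀ i ≠ k, A i k = 0) (hp : A k k ≠ 0) :
    ∃ e ∈ elementarySubgroup D n, ClearedUpTo (k + 1) (A * e.val) := by
  set r : Fin n → D := Function.update (fun b => -((A k k)⁻¹ * A k b)) k 0
  have hr : ∀ b ≠ k, r b = -((A k k)⁻¹ * A k b) := fun b hb => Function.update_of_ne hb _ _
  obtain ⟨e, he, hval⟩ := exists_val_eq_one_add_vecMulVec_single_left k (r := r) (by simp [r])
  have hentry : ∀ a b, (A * e.val) a b = A a b + A a k * r b := fun a b => by
    rw [hval, mul_one_add_vecMulVec_apply, mulVec_single_one, col_apply]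
  refine ⟨e, he, fun a b hab hlt => ?_⟩
  rw [hentry]
  rcases eq_or_ne a k with rfl | hak
  · rw [hr b hab.symm, mul_neg, ← mul_assoc, mul_inv_cancel₀ hp, one_mul, add_neg_cancel]
  rw [hcol a hak, zero_mul, add_zero]
  rcases eq_or_ne b k with rfl | hbk
  · exact hcol a hak
  have := Fin.val_ne_of_ne hak
  have := Fin.val_ne_of_ne hbk
  exact hA a b hab (by omega)

theorem exists_clearedUpTo_succ {g : GL (Fin n) D} {k : Fin n} (hg : ClearedUpTo k g.val) :
    ∃ e ∈ elementarySubgroup D n, ∃ e' ∈ elementarySubgroup D n,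
      ClearedUpTo (k + 1) (e * g * e').val := by
  obtain ⟨e₁, he₁, h₁, hp₁⟩ := exists_clearedUpTo_mul_apply_self_ne_zero hg
  obtain ⟨e₂, he₂, h₂, hcol₂, hp₂⟩ := exists_clearedUpTo_mul_col h₁ hp₁
  obtain ⟨e₃, he₃, h₃⟩ := exists_clearedUpTo_succ_mul_row h₂ hcol₂ (hp₂ ▸ hp₁)
  refine ⟨e₂ * e₁, mul_mem he₂ he₁, e₃, he₃, ?_⟩
  simpa only [Units.val_mul, Matrix.mul_assoc] using h₃

theorem exists_mul_mul_isDiag (g : GL (Fin n) D) :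
    ∃ e ∈ elementarySubgroup D n, ∃ e' ∈ elementarySubgroup D n, (e * g * e').val.IsDiag := by
  suffices ∀ m ≤ n, ∃ e ∈ elementarySubgroup D n, ∃ e' ∈ elementarySubgroup D n,
      ClearedUpTo m (e * g * e').val by
    obtain ⟨e, he, e', he', h⟩ := this n le_rfl
    exact ⟨e, he, e', he', h.isDiag⟩
  intro m hm
  induction m with
  | zero => exact ⟨1, one_mem _, 1, one_mem _, clearedUpTo_zero _⟩
  | succ m ih =>
    obtain ⟨e, he, e', he', h⟩ := ih (by omega)
    obtain ⟨f, hf, f', hf', h'⟩ := exists_clearedUpTo_succ (k := ⟨m, by omega⟩) h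
    refine ⟨f * e, mul_mem hf he, e' * f', mul_mem he' hf', ?_⟩
    simpa only [mul_assoc] using h'

theorem exists_mem_mul_diagUnits (g : GL (Fin n) D) :
    ∃ e ∈ elementarySubgroup D n, ∃ d, g = e * diagUnits d := by
  obtain ⟨e, he, e', he', h⟩ := exists_mul_mul_isDiag g
  obtain ⟨d, hd⟩ := exists_eq_diagUnits_of_isDiag h
  refine ⟨e⁻¹ * (diagUnits d * e'⁻¹ * (diagUnits d)⁻¹),
    mul_mem (inv_mem he) (diagUnits_mul_mul_inv_mem d (inv_mem he')), d, ?_⟩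
  rw [← hd]
  group

instance : (elementarySubgroup D n).Normal where
  conj_mem u hu g := by
    obtain ⟨e, he, d, rfl⟩ := exists_mem_mul_diagUnits g
    have : e * diagUnits d * u * (e * diagUnits d)⁻¹ =
        e * (diagUnits d * u * (diagUnits d)⁻¹) * e⁻¹ := by group
    rw [this]
    exact mul_mem (mul_mem he (diagUnits_mul_mul_inv_mem d hu)) (inv_mem he)

theorem commutator_le_elementarySubgroup (hn : 2 ≤ n) :
    commutator (GL (Fin n) D) ≤ elementarySubgroup D n := by
  have : Nontrivial (Fin n) := Fin.nontrivial_iff_two_le.mpr hn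
  have hdiag : commutator (Fin n → Dˣ) ≤ (elementarySubgroup D n).comap diagUnits :=
    commutator_pi_le_of_mulSingle_mul_mulSingle_inv_mem fun i j hji x =>
      diagUnits_mulSingle_mul_mulSingle_inv_mem hji.symm x
  let π := QuotientGroup.mk' (elementarySubgroup D n)
  have hπ : ∀ g, ∃ d, π g = π (diagUnits d) := fun g => by
    obtain ⟨e, he, d, rfl⟩ := exists_mem_mul_diagUnits g
    exact ⟨d, by rw [map_mul, show π e = 1 from (QuotientGroup.eq_one_iff e).2 he, one_mul]⟩
  rw [commutator_def, Subgroup.commutator_le]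
  rintro g - h -
  obtain ⟨d, hd⟩ := hπ g
  obtain ⟨d', hd'⟩ := hπ h
  rw [← QuotientGroup.ker_mk' (elementarySubgroup D n), MonoidHom.mem_ker, map_commutatorElement,
    hd, hd', ← map_commutatorElement, ← map_commutatorElement, ← MonoidHom.mem_ker,
    QuotientGroup.ker_mk']
  exact hdiag (Subgroup.commutator_mem_commutator (Subgroup.mem_top _) (Subgroup.mem_top _))

end DivisionRing

end Matrix

theorem elementary_eq_commutator_GLn_general
    (D : Type*) [DivisionRing D]
    (n : ℕ) (hn : 3 ≤ n) :
    Subgroup.closure (elemSet D n) = commutator ((Matrix (Fin n) (Fin n) D)ˣ) :=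
  le_antisymm (elementarySubgroup_le_commutator hn) (commutator_le_elementarySubgroup (by omega))

/-- let `D` be a finite-dimensional central division algebra over a field `K`
and `n ≥ 3`.  Then the elementary subgroup `E_n(D)` equals the commutator subgroup of
`GL_n(D)`. -/
theorem elementary_eq_commutator_GLn
    (K : Type*) [Field K] (D : Type*) [DivisionRing D] [Algebra K D]
    [FiniteDimensional K D] (hcentral : Subalgebra.center K D = ⊥)
    (n : ℕ) (hn : 3 ≤ n) :
    Subgroup.closure (elemSet D n) = commutator ((Matrix (Fin n) (Fin n) D)ˣ) :=
  elementary_eq_commutator_GLn_general D n hn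
end

section
/- Let Γ be a group and suppose there is a constant c such that for every finite-index normal subgroup N of Γ, Γ = ([Γ,Γ]-products of length ≤ c)·N, i.e., every coset of N contains a product of at most c commutators. Then for the ultrapower Γ* and every internal finite-index normal subgroup N* = [N_n]_n, one has Γ* = [Γ*,Γ*]^c · N*, and consequently Γ*/([Γ*,Γ*]∩N*-generated subgroup) splits as Γ*_ab × Γ*/N* when [Γ*,Γ*]^c · N* = Γ*. -/
/-!
Given `g = [f n]`, pick in each coordinate a product of at most `c` commutators in the coset
`f n * N n`. Padded with trivial commutators `⁅1, 1⁆`, these all have exactly `c` factors, so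
they assemble coordinatewise into a product of `c` commutators in `Γ*` lying in `g * N*`.
Hence `[Γ*,Γ*] ⊔ N* = Γ*`; as these are the kernels of the two factors of
`Γ* → Γ*_ab × Γ*/N*`, that map is surjective, and its kernel is their intersection.
-/

open Filter
open scoped commutatorElement

variable {Γ : Type*} [Group Γ]

/-- The internal subgroup `[N_n]_n` of the ultrapower `Γ* = ∏_U Γ` determined by a sequence
of subgroups of `Γ`. -/
def germSubgroup (U : Ultrafilter ℕ) (N : ℕ → Subgroup Γ) :
    Subgroup (Filter.Germ (U : Filter ℕ) Γ) where
  carrier := {x | ∃ f : ℕ → Γ, x = (↑f : Filter.Germ (U : Filter ℕ) Γ) ∧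
    ∀ᶠ n in (U : Filter ℕ), f n ∈ N n}
  one_mem' := ⟨1, rfl, Eventually.of_forall fun n => (N n).one_mem⟩
  mul_mem' := by
    rintro x y ⟨f, rfl, hf⟩ ⟨g, rfl, hg⟩
    exact ⟨f * g, rfl, (hf.and hg).mono fun n hn => (N n).mul_mem hn.1 hn.2⟩
  inv_mem' := by
    rintro x ⟨f, rfl, hf⟩
    exact ⟨f⁻¹, rfl, hf.mono fun n hn => (N n).inv_mem hn⟩

/-- The internal subgroup determined by a sequence of normal subgroups is normal. -/
lemma germSubgroup_normal (U : Ultrafilter ℕ) (N : ℕ → Subgroup Γ)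
    (hN : ∀ n, (N n).Normal) : (germSubgroup U N).Normal := by
  constructor
  rintro x ⟨f, rfl, hf⟩ g
  refine Filter.Germ.inductionOn g fun h => ?_
  exact ⟨h * f * h⁻¹, rfl, hf.mono fun n hn => (hN n).conj_mem _ hn (h n)⟩

theorem MonoidHom.prod_surjective_of_sup_ker_eq_top {G M N : Type*} [Group G] [MulOneClass M]
    [MulOneClass N] {f : G →* M} {g : G →* N} (hf : Function.Surjective f)
    (hg : Function.Surjective g) (hfg : f.ker ⊔ g.ker = ⊤) :
    Function.Surjective (f.prod g) := by
  rintro ⟨x, y⟩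
  obtain ⟨a, rfl⟩ := hf x
  obtain ⟨b, rfl⟩ := hg y
  obtain ⟨p, hp, m, hm, hpm⟩ :=
    Subgroup.mem_sup_of_normal_right.mp (hfg ▸ Subgroup.mem_top (a⁻¹ * b))
  have hap : a * p = b * m⁻¹ := by
    rw [eq_mul_inv_iff_mul_eq, mul_assoc, hpm, mul_inv_cancel_left]
  refine ⟨a * p, Prod.ext ?_ ?_⟩
  · simp [f.mem_ker.mp hp]
  · simp [hap, g.mem_ker.mp (inv_mem hm)]

section CommutatorProducts

variable {G : Type*} [Group G]

theorem list_prod_mem_commutator {l : List G} (hl : ∀ x ∈ l, ∃ a b : G, x = ⁅a, b⁆) :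
    l.prod ∈ commutator G :=
  Subgroup.list_prod_mem _ fun x hx => by
    obtain ⟨a, b, rfl⟩ := hl x hx
    exact Subgroup.commutator_mem_commutator (Subgroup.mem_top a) (Subgroup.mem_top b)

theorem exists_ofFn_commutator_prod_eq {c : ℕ} {l : List G} (hlen : l.length ≤ c)
    (hl : ∀ x ∈ l, ∃ a b : G, x = ⁅a, b⁆) :
    ∃ a b : Fin c → G, (List.ofFn fun i => ⁅a i, b i⁆).prod = l.prod := by
  induction l generalizing c with
  | nil => exact ⟨1, 1, by simp⟩
  | cons x l ih =>
    obtain ⟨c, rfl⟩ : ∃ c', c = c' + 1 := Nat.exists_eq_add_one.mpr (by simp at hlen; omega)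
    obtain ⟨a₀, b₀, rfl⟩ := hl x List.mem_cons_self
    obtain ⟨a, b, hab⟩ := ih (by simpa using hlen) fun y hy => hl y (List.mem_cons_of_mem _ hy)
    exact ⟨Fin.cons a₀ a, Fin.cons b₀ b, by simp [List.ofFn_succ, hab]⟩

theorem map_ofFn_commutator_prod {H : Type*} [Group H] (φ : G →* H) {c : ℕ} (a b : Fin c → G) :
    φ (List.ofFn fun i => ⁅a i, b i⁆).prod = (List.ofFn fun i => ⁅φ (a i), φ (b i)⁆).prod := by
  simp [map_list_prod, List.map_ofFn, Function.comp_def, map_commutatorElement]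

theorem Filter.Germ.coe_ofFn_commutator_prod {α : Type*} (l : Filter α) {c : ℕ}
    (a b : α → Fin c → G) :
    ((fun n => (List.ofFn fun i => ⁅a n i, b n i⁆).prod : α → G) : Germ l G) =
      (List.ofFn fun i =>
        ⁅((fun n => a n i : α → G) : Germ l G), ↑(fun n => b n i : α → G)⁆).prod := by
  have hpi : (fun n => (List.ofFn fun i => ⁅a n i, b n i⁆).prod) =
      (List.ofFn fun i => ⁅fun n => a n i, fun n => b n i⁆).prod :=
    funext fun n => (map_ofFn_commutator_prod (Pi.evalMonoidHom (fun _ => G) n)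
      (fun i n => a n i) (fun i n => b n i)).symm
  rw [hpi]
  exact map_ofFn_commutator_prod (G := α → G) (H := Germ l G) (Germ.coeMulHom l) _ _

end CommutatorProducts

theorem exists_commutators_mul_mem_germSubgroup {c : ℕ} (U : Ultrafilter ℕ)
    (N : ℕ → Subgroup Γ)
    (h : ∀ n, ∀ g : Γ, ∃ l : List Γ, l.length ≤ c ∧ (∀ x ∈ l, ∃ a b : Γ, x = ⁅a, b⁆) ∧
      ∃ m ∈ N n, g = l.prod * m)
    (g : Germ (U : Filter ℕ) Γ) :
    ∃ l : List (Germ (U : Filter ℕ) Γ), l.length ≤ c ∧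
      (∀ x ∈ l, ∃ a b : Germ (U : Filter ℕ) Γ, x = ⁅a, b⁆) ∧
      ∃ m ∈ germSubgroup U N, g = l.prod * m := by
  induction g using Germ.inductionOn with | h f => ?_
  choose l hlen hl m hm hf using fun n => h n (f n)
  choose a b hab using fun n => exists_ofFn_commutator_prod_eq (hlen n) (hl n)
  refine ⟨List.ofFn fun i => ⁅((fun n => a n i : ℕ → Γ) : Germ (U : Filter ℕ) Γ), ↑fun n => b n i⁆,
    (List.length_ofFn).le, ?_, m, ⟨m, rfl, Eventually.of_forall hm⟩, ?_⟩
  · simp only [List.mem_ofFn]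
    rintro x ⟨i, rfl⟩
    exact ⟨_, _, rfl⟩
  · rw [← Germ.coe_ofFn_commutator_prod, ← Germ.coe_mul]
    simp only [hab]
    exact congrArg _ (funext hf)

theorem ultrapower_commutator_coset_splitting_general
    (c : ℕ)
    (h : ∀ N : Subgroup Γ, N.Normal → N.FiniteIndex → ∀ g : Γ,
      ∃ l : List Γ, l.length ≤ c ∧ (∀ x ∈ l, ∃ a b : Γ, x = ⁅a, b⁆) ∧
        ∃ m ∈ N, g = l.prod * m)
    (U : Ultrafilter ℕ)
    (N : ℕ → Subgroup Γ) (hNnormal : ∀ n, (N n).Normal) (hNfi : ∀ n, (N n).FiniteIndex) :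
    (∀ g : Filter.Germ (U : Filter ℕ) Γ,
      ∃ l : List (Filter.Germ (U : Filter ℕ) Γ), l.length ≤ c ∧
        (∀ x ∈ l, ∃ a b : Filter.Germ (U : Filter ℕ) Γ, x = ⁅a, b⁆) ∧
        ∃ m ∈ germSubgroup U N, g = l.prod * m) ∧
    (letI := germSubgroup_normal U N hNnormal
     let φ := (Abelianization.of : Filter.Germ (U : Filter ℕ) Γ →*
        Abelianization (Filter.Germ (U : Filter ℕ) Γ)).prod
        (QuotientGroup.mk' (germSubgroup U N))
     Function.Surjective φ ∧
       φ.ker = commutator (Filter.Germ (U : Filter ℕ) Γ) ⊓ germSubgroup U N) := by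
  have hcoset := exists_commutators_mul_mem_germSubgroup U N
    fun n => h (N n) (hNnormal n) (hNfi n)
  have hsup : commutator (Germ (U : Filter ℕ) Γ) ⊔ germSubgroup U N = ⊤ := by
    refine eq_top_iff.mpr fun g _ => ?_
    obtain ⟨l, -, hl, m, hm, rfl⟩ := hcoset g
    exact Subgroup.mul_mem_sup (list_prod_mem_commutator hl) hm
  have := germSubgroup_normal U N hNnormal
  refine ⟨hcoset, ?_, ?_⟩
  · refine MonoidHom.prod_surjective_of_sup_ker_eq_top
      (QuotientGroup.mk'_surjective (commutator _)) (QuotientGroup.mk'_surjective _) ?_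
    rwa [Abelianization.ker_of, QuotientGroup.ker_mk']
  · rw [MonoidHom.ker_prod, Abelianization.ker_of, QuotientGroup.ker_mk']

/-- suppose there is `c` such that for every finite-index normal subgroup
`N ◁ Γ` every coset of `N` contains a product of at most `c` commutators.  Then, in the
ultrapower `Γ*` over a non-principal ultrafilter, for every internal finite-index normal
subgroup `N* = [N_n]_n` one has `Γ* = [Γ*,Γ*]^c · N*`; consequently the natural map
`Γ* → Γ*_ab × Γ*/N*` is surjective with kernel `[Γ*,Γ*] ⊓ N*`, exhibiting the splitting
`Γ*/([Γ*,Γ*] ⊓ N*) ≅ Γ*_ab × Γ*/N*`. -/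
theorem ultrapower_commutator_coset_splitting
    (c : ℕ)
    (h : ∀ N : Subgroup Γ, N.Normal → N.FiniteIndex → ∀ g : Γ,
      ∃ l : List Γ, l.length ≤ c ∧ (∀ x ∈ l, ∃ a b : Γ, x = ⁅a, b⁆) ∧
        ∃ m ∈ N, g = l.prod * m)
    (U : Ultrafilter ℕ) (hU : ∀ a : ℕ, (U : Filter ℕ) ≠ pure a)
    (N : ℕ → Subgroup Γ) (hNnormal : ∀ n, (N n).Normal) (hNfi : ∀ n, (N n).FiniteIndex) :
    (∀ g : Filter.Germ (U : Filter ℕ) Γ,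
      ∃ l : List (Filter.Germ (U : Filter ℕ) Γ), l.length ≤ c ∧
        (∀ x ∈ l, ∃ a b : Filter.Germ (U : Filter ℕ) Γ, x = ⁅a, b⁆) ∧
        ∃ m ∈ germSubgroup U N, g = l.prod * m) ∧
    (letI := germSubgroup_normal U N hNnormal
     let φ := (Abelianization.of : Filter.Germ (U : Filter ℕ) Γ →*
        Abelianization (Filter.Germ (U : Filter ℕ) Γ)).prod
        (QuotientGroup.mk' (germSubgroup U N))
     Function.Surjective φ ∧
       φ.ker = commutator (Filter.Germ (U : Filter ℕ) Γ) ⊓ germSubgroup U N) :=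
  ultrapower_commutator_coset_splitting_general c h U N hNnormal hNfi
end
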